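/- arXiv:2211.07140 — 3 statements merged into one kernel-verified Lean document; each statement's English description precedes it below -/
import Mathlib

section
/- Let π : ℤ^d → Γ be a surjective group homomorphism with kernel L, let F ⊆ Γ with 0 ∈ F, let A ⊆ Γ, and let D be a fundamental domain for L. Then π⁻¹(F ⊕ A) = ((π⁻¹(F \ {0}) ∩ D) ⊕ π⁻¹(A)) ⊎ π⁻¹(A), where the union is disjoint, provided F ⊕ A is a direct sum (every element of F + A has a unique representation f + a). -/
/-!
Since `0 ∈ F` and the sum `F ⊕ A` is direct, `F + A` is the disjoint union of `(F \ {0}) + A`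
and `A`. A fundamental domain `D` of `ker π` is mapped bijectively onto `Γ` by `π`, so a preimage
of `f + a` splits uniquely as `d + x` with `d ∈ D`, `π d = f` and `π x = a`.
-/

open Pointwise

/-- `A ⊕ B` is direct: representations `a + b` with `a ∈ A`, `b ∈ B` are unique. -/
def UniqRep {G : Type*} [AddCommGroup G] (A B : Set G) : Prop :=
  ∀ a₁ ∈ A, ∀ b₁ ∈ B, ∀ a₂ ∈ A, ∀ b₂ ∈ B, a₁ + b₁ = a₂ + b₂ → a₁ = a₂ ∧ b₁ = b₂

/-- `A ⊕ B = C`: the sumset `A + B` equals `C` and representations are unique. -/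
def DSum {G : Type*} [AddCommGroup G] (A B C : Set G) : Prop :=
  UniqRep A B ∧ A + B = C

section

variable {G Γ : Type*} [AddCommGroup G] [AddCommGroup Γ]

theorem UniqRep.mono {A A' B B' : Set G} (h : UniqRep A B) (hA : A' ⊆ A) (hB : B' ⊆ B) :
    UniqRep A' B' :=
  fun a₁ ha₁ b₁ hb₁ a₂ ha₂ b₂ hb₂ ↦ h a₁ (hA ha₁) b₁ (hB hb₁) a₂ (hA ha₂) b₂ (hB hb₂)

theorem add_eq_sdiff_zero_add_union {F A : Set G} (hF0 : (0 : G) ∈ F) :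
    F + A = ((F \ {0}) + A) ∪ A := by
  conv_lhs => rw [← Set.insert_sdiff_self_of_mem hF0, Set.insert_eq, Set.union_add,
    Set.singleton_zero, zero_add]
  exact Set.union_comm _ _

theorem UniqRep.disjoint_sdiff_zero_add {F A : Set G} (h : UniqRep F A) (hF0 : (0 : G) ∈ F) :
    Disjoint ((F \ {0}) + A) A := by
  rw [Set.disjoint_left]
  rintro _ ⟨f, ⟨hf, hf0⟩, a, ha, rfl⟩ hfa
  exact hf0 (h f hf a ha 0 hF0 (f + a) hfa (zero_add _).symm).1

theorem injOn_of_uniqRep_ker {π : G →+ Γ} {D : Set G} (hD : UniqRep D (π.ker : Set G)) :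
    Set.InjOn π D := by
  intro d₁ hd₁ d₂ hd₂ hπd
  have hker : d₁ - d₂ ∈ π.ker := by rw [AddMonoidHom.mem_ker, map_sub, hπd, sub_self]
  exact (hD d₁ hd₁ 0 π.ker.zero_mem d₂ hd₂ (d₁ - d₂) hker (by abel)).1

theorem surjOn_of_add_ker_eq_univ {π : G →+ Γ} (hπ : Function.Surjective π) {D : Set G}
    (hD : D + (π.ker : Set G) = Set.univ) : Set.SurjOn π D Set.univ := by
  intro γ _
  obtain ⟨y, rfl⟩ := hπ γ
  obtain ⟨d, hd, k, hk, rfl⟩ : y ∈ D + (π.ker : Set G) := hD ▸ Set.mem_univ y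
  exact ⟨d, hd, by rw [map_add, AddMonoidHom.mem_ker.mp hk, add_zero]⟩

theorem preimage_add_eq_inter_add_preimage {π : G →+ Γ} {D : Set G} {S T : Set Γ}
    (hD : Set.SurjOn π D S) : π ⁻¹' (S + T) = (π ⁻¹' S ∩ D) + π ⁻¹' T := by
  ext x
  constructor
  · rintro ⟨s, hs, t, ht, hx⟩
    obtain ⟨d, hd, rfl⟩ := hD hs
    refine ⟨d, ⟨hs, hd⟩, x - d, ?_, add_sub_cancel d x⟩
    rwa [Set.mem_preimage, map_sub, ← hx, add_sub_cancel_left]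
  · rintro ⟨y, ⟨hy, -⟩, z, hz, rfl⟩
    exact ⟨π y, hy, π z, hz, (map_add π y z).symm⟩

theorem UniqRep.preimage_inter {π : G →+ Γ} {D : Set G} {S T : Set Γ} (h : UniqRep S T)
    (hD : Set.InjOn π D) : UniqRep (π ⁻¹' S ∩ D) (π ⁻¹' T) := by
  rintro y₁ ⟨hy₁, hy₁D⟩ z₁ hz₁ y₂ ⟨hy₂, hy₂D⟩ z₂ hz₂ heq
  have hπ := h (π y₁) hy₁ (π z₁) hz₁ (π y₂) hy₂ (π z₂) hz₂ (by rw [← map_add, ← map_add, heq])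
  obtain rfl : y₁ = y₂ := hD hy₁D hy₂D hπ.1
  exact ⟨rfl, add_left_cancel heq⟩

end

theorem stmt4_general {d : ℕ} {Γ : Type*} [AddCommGroup Γ] (π : (Fin d → ℤ) →+ Γ)
    (hπ : Function.Surjective π) (D : Set (Fin d → ℤ))
    (hD : DSum D (π.ker : Set (Fin d → ℤ)) Set.univ)
    (F A : Set Γ) (hF0 : (0 : Γ) ∈ F) (hFA : UniqRep F A) :
    π ⁻¹' (F + A) = ((π ⁻¹' (F \ {0}) ∩ D) + π ⁻¹' A) ∪ π ⁻¹' A ∧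
    Disjoint ((π ⁻¹' (F \ {0}) ∩ D) + π ⁻¹' A) (π ⁻¹' A) ∧
    UniqRep (π ⁻¹' (F \ {0}) ∩ D) (π ⁻¹' A) := by
  obtain ⟨hDu, hDe⟩ := hD
  have hsplit : π ⁻¹' ((F \ {0}) + A) = (π ⁻¹' (F \ {0}) ∩ D) + π ⁻¹' A :=
    preimage_add_eq_inter_add_preimage
      ((surjOn_of_add_ker_eq_univ hπ hDe).mono subset_rfl (Set.subset_univ _))
  refine ⟨?_, ?_, ?_⟩
  · rw [← hsplit, add_eq_sdiff_zero_add_union hF0, Set.preimage_union]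
  · exact hsplit ▸ (hFA.disjoint_sdiff_zero_add hF0).preimage π
  · exact (hFA.mono Set.sdiff_subset subset_rfl).preimage_inter (injOn_of_uniqRep_ker hDu)

theorem stmt4 {d : ℕ} {Γ : Type*} [AddCommGroup Γ] (π : (Fin d → ℤ) →+ Γ)
    (hπ : Function.Surjective π) (D : Set (Fin d → ℤ))
    (hD : DSum D (π.ker : Set (Fin d → ℤ)) Set.univ) (hD0 : (0 : Fin d → ℤ) ∈ D)
    (F A : Set Γ) (hF0 : (0 : Γ) ∈ F) (hFA : UniqRep F A) :
    π ⁻¹' (F + A) = ((π ⁻¹' (F \ {0}) ∩ D) + π ⁻¹' A) ∪ π ⁻¹' A ∧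
    Disjoint ((π ⁻¹' (F \ {0}) ∩ D) + π ⁻¹' A) (π ⁻¹' A) ∧
    UniqRep (π ⁻¹' (F \ {0}) ∩ D) (π ⁻¹' A) :=
  stmt4_general π hπ D hD F A hF0 hFA
end

section
/- Let G be an abelian group, let T, T' ⊆ G be finite sets, let H ≤ G be a subgroup with T ⊕ H = T' ⊕ H (as direct sums giving the same set), and let C ⊆ G be H-periodic. Then T ⊕ C = T' ⊕ C whenever either side is a direct sum; in particular, if C ∈ Tile(T; E) and C is H-periodic, then C ∈ Tile(T'; E). -/
/-!
An `H`-periodic set satisfies `C + H = C`, so `T + C = (T + H) + C` depends only on `T + H`.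
For uniqueness, write `t' = t + h` with `t ∈ T`, `h ∈ H`; a collision `t'₁ + c₁ = t'₂ + c₂` becomes
the collision `t₁ + (c₁ + h₁) = t₂ + (c₂ + h₂)` in `T ⊕ C`, whence `t₁ = t₂`, and then
`T' ⊕ H` forces `h₁ = h₂`.
-/

open Pointwise

section

variable {G : Type*} [AddCommGroup G]

def IsPeriodic (H : AddSubgroup G) (C : Set G) : Prop :=
  ∀ h ∈ H, ∀ x : G, x + h ∈ C ↔ x ∈ C

namespace IsPeriodic

variable {H : AddSubgroup G} {C : Set G}

theorem add_eq_self (hC : IsPeriodic H C) : C + (H : Set G) = C := by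
  refine Set.Subset.antisymm ?_ (Set.subset_add_left C H.zero_mem)
  rintro _ ⟨c, hc, h, hh, rfl⟩
  exact (hC h hh c).mpr hc

theorem add_eq_add_of_add_eq_add (hC : IsPeriodic H C) {T T' : Set G}
    (hEq : T + (H : Set G) = T' + (H : Set G)) : T + C = T' + C := by
  rw [← hC.add_eq_self, add_comm C, ← add_assoc, hEq, add_assoc, add_comm (H : Set G)]

theorem uniqRep_of_subset_add (hC : IsPeriodic H C) {A B : Set G}
    (hBH : UniqRep B (H : Set G)) (hBA : B ⊆ A + (H : Set G)) (hAC : UniqRep A C) :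
    UniqRep B C := by
  intro b₁ hb₁ c₁ hc₁ b₂ hb₂ c₂ hc₂ heq
  obtain ⟨a₁, ha₁, h₁, hh₁, rfl⟩ := Set.mem_add.mp (hBA hb₁)
  obtain ⟨a₂, ha₂, h₂, hh₂, rfl⟩ := Set.mem_add.mp (hBA hb₂)
  have hshift : a₁ + (c₁ + h₁) = a₂ + (c₂ + h₂) := by
    calc a₁ + (c₁ + h₁) = a₁ + h₁ + c₁ := by abel
      _ = a₂ + h₂ + c₂ := heq
      _ = a₂ + (c₂ + h₂) := by abel
  obtain ⟨rfl, -⟩ :=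
    hAC a₁ ha₁ _ ((hC h₁ hh₁ c₁).mpr hc₁) a₂ ha₂ _ ((hC h₂ hh₂ c₂).mpr hc₂) hshift
  obtain ⟨hb, -⟩ := hBH (a₁ + h₁) hb₁ h₂ hh₂ (a₁ + h₂) hb₂ h₁ hh₁ (by abel)
  rw [hb] at heq
  exact ⟨hb, add_left_cancel heq⟩

end IsPeriodic

end

theorem stmt7_general {G : Type*} [AddCommGroup G] (T T' : Set G)
    (H : AddSubgroup G)
    (hTH : UniqRep T (H : Set G)) (hT'H : UniqRep T' (H : Set G))
    (hEq : T + (H : Set G) = T' + (H : Set G))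
    (C : Set G) (hC : ∀ h ∈ H, ∀ x : G, x + h ∈ C ↔ x ∈ C) :
    T + C = T' + C ∧ (UniqRep T C ↔ UniqRep T' C) ∧
      ∀ E : Set G, DSum T C E → DSum T' C E := by
  have hper : IsPeriodic H C := hC
  have hT_sub : T ⊆ T' + (H : Set G) := hEq ▸ Set.subset_add_left T H.zero_mem
  have hT'_sub : T' ⊆ T + (H : Set G) := hEq ▸ Set.subset_add_left T' H.zero_mem
  have hsum : T + C = T' + C := hper.add_eq_add_of_add_eq_add hEq
  have huniq : UniqRep T C ↔ UniqRep T' C :=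
    ⟨hper.uniqRep_of_subset_add hT'H hT'_sub, hper.uniqRep_of_subset_add hTH hT_sub⟩
  exact ⟨hsum, huniq, fun E ⟨hTC, hE⟩ => ⟨huniq.mp hTC, hsum ▸ hE⟩⟩

theorem stmt7 {G : Type*} [AddCommGroup G] (T T' : Set G) (hT : T.Finite) (hT' : T'.Finite)
    (H : AddSubgroup G)
    (hTH : UniqRep T (H : Set G)) (hT'H : UniqRep T' (H : Set G))
    (hEq : T + (H : Set G) = T' + (H : Set G))
    (C : Set G) (hC : ∀ h ∈ H, ∀ x : G, x + h ∈ C ↔ x ∈ C) :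
    T + C = T' + C ∧ (UniqRep T C ↔ UniqRep T' C) ∧
      ∀ E : Set G, DSum T C E → DSum T' C E :=
  stmt7_general T T' H hTH hT'H hEq C hC
end

section
/- Suppose D ⊆ ℤ^d is a fundamental domain for L = ker(π) with 0 ∈ D, and suppose sets A₁,…,A_k ⊆ Γ satisfy that the sets (π⁻¹(F_j) ∩ D) ⊕ π⁻¹(A_j) (direct sums) are pairwise disjoint with union ℤ^d, where each π⁻¹(A_j) is L-periodic. Then the sets F_j ⊕ A_j are direct sums, pairwise disjoint, with union Γ, i.e., (A₁,…,A_k) ∈ Tile(F₁,…,F_k; Γ). -/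
/-! Every element of `Γ` has a lift in `D`, so `(π⁻¹' F ∩ D) + π⁻¹' A = π⁻¹' (F + A)`: the tiling of
`ℤ^d` is the preimage of the candidate tiling of `Γ`, and disjointness and covering descend along the
surjection `π`. Uniqueness of representations in `Γ` is lifted to `ℤ^d` by choosing the `F`-summands in
`D` and adjusting the `A`-summand by an element of the kernel. -/

open Pointwise

open Set

namespace AddMonoidHom

variable {G H : Type*} [AddCommGroup G] [AddCommGroup H] (π : G →+ H) {D : Set G}

theorem image_eq_univ_of_add_ker_eq_univ (hπ : Function.Surjective π)
    (hD : D + (π.ker : Set G) = univ) : π '' D = univ := by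
  refine eq_univ_of_forall fun g => ?_
  obtain ⟨y, rfl⟩ := hπ g
  obtain ⟨u, hu, l, hl, rfl⟩ := mem_add.1 (hD.symm ▸ mem_univ y : y ∈ D + (π.ker : Set G))
  exact ⟨u, hu, by rw [map_add, mem_ker.1 hl, add_zero]⟩

theorem preimage_inter_add_preimage (hD : π '' D = univ) (F A : Set H) :
    (π ⁻¹' F ∩ D) + π ⁻¹' A = π ⁻¹' (F + A) := by
  ext x
  constructor
  · rintro ⟨u, ⟨hu, -⟩, v, hv, rfl⟩
    exact ⟨π u, hu, π v, hv, (map_add π u v).symm⟩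
  · rintro ⟨f, hf, a, ha, hfa⟩
    obtain ⟨u, huD, rfl⟩ := hD.symm ▸ mem_univ f
    refine ⟨u, ⟨hf, huD⟩, x - u, ?_, add_sub_cancel _ _⟩
    rwa [mem_preimage, map_sub, ← hfa, add_sub_cancel_left]

theorem uniqRep_of_uniqRep_preimage (hD : π '' D = univ) {F A : Set H}
    (hU : UniqRep (π ⁻¹' F ∩ D) (π ⁻¹' A)) : UniqRep F A := by
  intro f₁ hf₁ a₁ ha₁ f₂ hf₂ a₂ ha₂ heq
  obtain ⟨x₁, hx₁, rfl⟩ := hD.symm ▸ mem_univ f₁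
  obtain ⟨x₂, hx₂, rfl⟩ := hD.symm ▸ mem_univ f₂
  obtain ⟨y₁, -, rfl⟩ := hD.symm ▸ mem_univ a₁
  -- the second `A`-summand is lifted so that the two sums agree already in `G`
  have hy₂ : π (x₁ + y₁ - x₂) = a₂ := by
    rw [map_sub, map_add, heq, add_sub_cancel_left]
  obtain ⟨hx, hy⟩ := hU x₁ ⟨hf₁, hx₁⟩ y₁ ha₁ x₂ ⟨hf₂, hx₂⟩ (x₁ + y₁ - x₂)
    (by rwa [mem_preimage, hy₂]) (add_sub_cancel _ _).symm
  exact ⟨congrArg π hx, by rw [hy, hy₂]⟩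

end AddMonoidHom

theorem stmt19_general {d k : ℕ} {Γ : Type*} [AddCommGroup Γ] (π : (Fin d → ℤ) →+ Γ)
    (hπ : Function.Surjective π) (D : Set (Fin d → ℤ))
    (hD : DSum D (π.ker : Set (Fin d → ℤ)) Set.univ)
    (F : Fin k → Set Γ) (A : Fin k → Set Γ)
    (hU : ∀ j, UniqRep (π ⁻¹' (F j) ∩ D) (π ⁻¹' (A j)))
    (hdisj : Pairwise (Function.onFun Disjoint
      (fun j => (π ⁻¹' (F j) ∩ D) + π ⁻¹' (A j))))
    (hcover : (⋃ j, (π ⁻¹' (F j) ∩ D) + π ⁻¹' (A j)) = Set.univ) :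
    (∀ j, UniqRep (F j) (A j)) ∧
    Pairwise (Function.onFun Disjoint (fun j => F j + A j)) ∧
    (⋃ j, F j + A j) = Set.univ := by
  have hDπ : π '' D = univ := π.image_eq_univ_of_add_ker_eq_univ hπ hD.2
  simp only [π.preimage_inter_add_preimage hDπ, ← preimage_iUnion] at hdisj hcover
  refine ⟨fun j => π.uniqRep_of_uniqRep_preimage hDπ (hU j), fun i j hij => ?_, ?_⟩
  · exact (disjoint_preimage_iff hπ).1 (hdisj hij)
  · exact hπ.preimage_injective (by rw [hcover, preimage_univ])

theorem stmt19 {d k : ℕ} {Γ : Type*} [AddCommGroup Γ] (π : (Fin d → ℤ) →+ Γ)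
    (hπ : Function.Surjective π) (D : Set (Fin d → ℤ))
    (hD : DSum D (π.ker : Set (Fin d → ℤ)) Set.univ) (hD0 : (0 : Fin d → ℤ) ∈ D)
    (F : Fin k → Set Γ) (hF : ∀ j, (F j).Finite) (A : Fin k → Set Γ)
    (hper : ∀ j, ∀ l ∈ π.ker, ∀ x : Fin d → ℤ,
      x + l ∈ π ⁻¹' (A j) ↔ x ∈ π ⁻¹' (A j))
    (hU : ∀ j, UniqRep (π ⁻¹' (F j) ∩ D) (π ⁻¹' (A j)))
    (hdisj : Pairwise (Function.onFun Disjoint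
      (fun j => (π ⁻¹' (F j) ∩ D) + π ⁻¹' (A j))))
    (hcover : (⋃ j, (π ⁻¹' (F j) ∩ D) + π ⁻¹' (A j)) = Set.univ) :
    (∀ j, UniqRep (F j) (A j)) ∧
    Pairwise (Function.onFun Disjoint (fun j => F j + A j)) ∧
    (⋃ j, F j + A j) = Set.univ :=
  stmt19_general π hπ D hD F A hU hdisj hcover
end
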